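/- Let d ≥ 1, X = [0,1]^d, let f, g : X → ℝ be bounded and measurable, and let ε > 0 and δ ∈ (0,1]. Then the Gibbs measure P_{g/ε} satisfies P_{g/ε}({x ∈ X : f(x) ≤ ε·L_{f/ε} − ε·log(1/δ) − ε·D_suplog(P_{f/ε}, P_{g/ε})}) ≤ δ; in other words, a sample from an approximate Gibbs distribution that is close to P_{f/ε} in sup-log distance is, with probability at least 1 − δ, an approximate maximizer of f up to ε·log(1/δ) plus ε times the sup-log distance. -/

import Mathlib

open MeasureTheory Real

noncomputable section

/-- The unit cube `[0,1]^d` in `ℝ^d`. -/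
def cube (d : ℕ) : Set (Fin d → ℝ) := Set.Icc 0 1

/-- The partition function `Z_f = ∫_X exp(f(x)) dx`. -/
def partZ {d : ℕ} (f : (Fin d → ℝ) → ℝ) : ℝ := ∫ x in cube d, Real.exp (f x)

/-- The log-partition function `L_f = log Z_f`. -/
def logPart {d : ℕ} (f : (Fin d → ℝ) → ℝ) : ℝ := Real.log (partZ f)

/-- The Gibbs measure `P_f` with density `exp(f(x))/Z_f` w.r.t. Lebesgue measure on the cube. -/
def gibbs {d : ℕ} (f : (Fin d → ℝ) → ℝ) : Measure (Fin d → ℝ) :=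
  (volume.restrict (cube d)).withDensity fun x => ENNReal.ofReal (Real.exp (f x) / partZ f)

/-- Essential supremum norm `‖h‖_∞` over the cube. -/
def supNormOn {d : ℕ} (h : (Fin d → ℝ) → ℝ) : ℝ :=
  essSup (fun x => |h x|) (volume.restrict (cube d))

/-- Total variation distance between two measures: `sup_A |P(A) − Q(A)|`. -/
def DTV {α : Type*} [MeasurableSpace α] (P Q : Measure α) : ℝ :=
  ⨆ A : {A : Set α // MeasurableSet A}, |(P A.1).toReal - (Q A.1).toReal|

/-- `f` is bounded on the cube. -/
def BddOnCube {d : ℕ} (f : (Fin d → ℝ) → ℝ) : Prop := ∃ C, ∀ x ∈ cube d, |f x| ≤ C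

/- The density of `P_v` is at most `exp (v - L_v)` (with equality unless the junk case `Z_v = 0`).
Off a null set, `g/ε - L_{g/ε} ≤ f/ε - L_{f/ε} + D`, so on the set where `f/ε` lies `log (1/δ) + D`
below `L_{f/ε}` the density of `P_{g/ε}` is at most `δ`; and the cube has volume `1`. -/

theorem volume_cube (d : ℕ) : volume (cube d) = 1 := by
  simp [cube, Real.volume_Icc_pi]

instance (d : ℕ) : IsProbabilityMeasure (volume.restrict (cube d)) :=
  ⟨by simp [volume_cube]⟩

theorem partZ_nonneg {d : ℕ} (f : (Fin d → ℝ) → ℝ) : 0 ≤ partZ f :=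
  integral_nonneg fun _ => (exp_pos _).le

theorem exp_div_le_exp_sub_log (a : ℝ) {Z : ℝ} (hZ : 0 ≤ Z) : exp a / Z ≤ exp (a - log Z) := by
  rcases hZ.eq_or_lt with rfl | hZ
  · simp [(exp_pos a).le]
  · rw [exp_sub, exp_log hZ]

theorem BddOnCube.div_const_sub {d : ℕ} {f : (Fin d → ℝ) → ℝ} (hf : BddOnCube f) (c a : ℝ) :
    BddOnCube fun x => f x / c - a := by
  obtain ⟨C, hC⟩ := hf
  refine ⟨C / |c| + |a|, fun x hx => (abs_sub _ _).trans (add_le_add_left ?_ _)⟩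
  rw [abs_div]
  exact div_le_div_of_nonneg_right (hC x hx) (abs_nonneg c)

theorem BddOnCube.sub {d : ℕ} {f g : (Fin d → ℝ) → ℝ} (hf : BddOnCube f) (hg : BddOnCube g) :
    BddOnCube (f - g) := by
  obtain ⟨C, hC⟩ := hf
  obtain ⟨C', hC'⟩ := hg
  exact ⟨C + C', fun x hx => (abs_sub _ _).trans (add_le_add (hC x hx) (hC' x hx))⟩

theorem ae_abs_le_supNormOn {d : ℕ} {h : (Fin d → ℝ) → ℝ} (hh : BddOnCube h) :
    ∀ᵐ x ∂volume.restrict (cube d), |h x| ≤ supNormOn h := by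
  obtain ⟨C, hC⟩ := hh
  refine ae_le_essSup ⟨C, ?_⟩
  rw [Filter.eventually_map]
  filter_upwards [ae_restrict_mem measurableSet_Icc] with x hx using hC x hx

theorem gibbs_le_of_ae_sub_logPart_le {d : ℕ} {v : (Fin d → ℝ) → ℝ} {A : Set (Fin d → ℝ)}
    (hA : MeasurableSet A) {δ : ℝ} (hδ : 0 < δ)
    (hvA : ∀ᵐ x ∂volume.restrict (cube d), x ∈ A → v x - logPart v ≤ log δ) :
    gibbs v A ≤ ENNReal.ofReal δ := by
  have density_le : ∀ᵐ x ∂volume.restrict (cube d), x ∈ A →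
      ENNReal.ofReal (exp (v x) / partZ v) ≤ ENNReal.ofReal δ := by
    filter_upwards [hvA] with x hx hxA
    refine ENNReal.ofReal_le_ofReal ((exp_div_le_exp_sub_log _ (partZ_nonneg v)).trans ?_)
    rw [← exp_log hδ]
    exact exp_le_exp.2 (hx hxA)
  rw [gibbs, withDensity_apply _ hA]
  calc ∫⁻ x in A, ENNReal.ofReal (exp (v x) / partZ v) ∂volume.restrict (cube d)
      ≤ ∫⁻ _ in A, ENNReal.ofReal δ ∂volume.restrict (cube d) := setLIntegral_mono_ae' hA density_le
    _ = ENNReal.ofReal δ * volume.restrict (cube d) A := setLIntegral_const _ _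
    _ ≤ ENNReal.ofReal δ := mul_le_of_le_one_right' prob_le_one

theorem gibbs_setOf_le_logPart_sub_le {d : ℕ} {u v : (Fin d → ℝ) → ℝ} (hu : Measurable u)
    (hbdd : BddOnCube fun y => (u y - logPart u) - (v y - logPart v)) {δ : ℝ} (hδ : 0 < δ) :
    gibbs v {x ∈ cube d | u x ≤ logPart u - log (1 / δ)
        - supNormOn (fun y => (u y - logPart u) - (v y - logPart v))}
      ≤ ENNReal.ofReal δ := by
  refine gibbs_le_of_ae_sub_logPart_le (measurableSet_Icc.inter (hu measurableSet_Iic)) hδ ?_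
  filter_upwards [ae_abs_le_supNormOn hbdd] with x hx hxA
  have hux : u x ≤ logPart u - log (1 / δ)
      - supNormOn (fun y => (u y - logPart u) - (v y - logPart v)) := hxA.2
  have hlog : log (1 / δ) = -log δ := by rw [one_div, log_inv]
  linarith [(abs_le.1 hx).1]

theorem opt_by_approximate_sampling_general (d : ℕ) (f g : (Fin d → ℝ) → ℝ)
    (hfm : Measurable f)
    (hfb : BddOnCube f) (hgb : BddOnCube g)
    (ε : ℝ) (hε : 0 < ε) (δ : ℝ) (hδ0 : 0 < δ) :
    gibbs (fun x => g x / ε)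
        {x ∈ cube d |
          f x ≤ ε * logPart (fun y => f y / ε) - ε * Real.log (1 / δ)
            - ε * supNormOn (fun y =>
                (f y / ε - logPart (fun z => f z / ε)) - (g y / ε - logPart (fun z => g z / ε)))}
      ≤ ENNReal.ofReal δ := by
  have hbdd := (hfb.div_const_sub ε (logPart fun z => f z / ε)).sub
    (hgb.div_const_sub ε (logPart fun z => g z / ε))
  convert gibbs_setOf_le_logPart_sub_le (hfm.div_const ε) hbdd hδ0 using 3
  ext x
  rw [← mul_sub, ← mul_sub, ← div_le_iff₀' hε]

/-- Proposition 3.3 (a), optimization by approximate sampling: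
for bounded measurable `f, g` on `X = [0,1]^d`, `ε > 0`, `δ ∈ (0,1]`,
`P_{g/ε}({x : f(x) ≤ ε L_{f/ε} − ε log(1/δ) − ε D_suplog(P_{f/ε}, P_{g/ε})}) ≤ δ`,
where `D_suplog(P_{f/ε}, P_{g/ε}) = ‖(f/ε − L_{f/ε}) − (g/ε − L_{g/ε})‖_∞`. -/
theorem opt_by_approximate_sampling (d : ℕ) (hd : 1 ≤ d) (f g : (Fin d → ℝ) → ℝ)
    (hfm : Measurable f) (hgm : Measurable g)
    (hfb : BddOnCube f) (hgb : BddOnCube g)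
    (ε : ℝ) (hε : 0 < ε) (δ : ℝ) (hδ0 : 0 < δ) (hδ1 : δ ≤ 1) :
    gibbs (fun x => g x / ε)
        {x ∈ cube d |
          f x ≤ ε * logPart (fun y => f y / ε) - ε * Real.log (1 / δ)
            - ε * supNormOn (fun y =>
                (f y / ε - logPart (fun z => f z / ε)) - (g y / ε - logPart (fun z => g z / ε)))}
      ≤ ENNReal.ofReal δ :=
  opt_by_approximate_sampling_general d f g hfm hfb hgb ε hε δ hδ0
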